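/- arXiv:0901.1806 — 2 statements merged into one kernel-verified Lean document; each statement's English description precedes it below -/
import Mathlib

section
/- Let K be a field and let α ∈ K[[t]] be a root of a polynomial q ∈ K[X] which is separable (i.e. q and its derivative generate the unit ideal) and nonzero. Then α is a constant power series, i.e. α ∈ K. -/
/-! Let `c` be the constant coefficient of `α`. Reducing `q(α) = 0` modulo `t` gives `q(c) = 0`,
so `q = (X - c) s` with `s(c) = q'(c)`, which is nonzero by separability. Then
`0 = q(α) = (α - c) s(α)`, and `s(α)` has nonzero constant coefficient `s(c)`, so `α = c`
because `K[[t]]` is a domain. -/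

open scoped Polynomial PowerSeries

namespace Polynomial

theorem eval_divByMonic_X_sub_C_of_isRoot {R : Type*} [CommRing R] {p : R[X]} {a : R}
    (h : p.IsRoot a) : (p /ₘ (X - C a)).eval a = p.derivative.eval a := by
  conv_rhs => rw [← mul_divByMonic_eq_iff_isRoot.2 h]
  simp [derivative_mul]

end Polynomial

namespace PowerSeries

variable {R : Type*} [CommRing R]

theorem constantCoeff_aeval (p : R[X]) (φ : R⟦X⟧) :
    constantCoeff (p.aeval φ) = p.eval (constantCoeff φ) := by
  have hcomp : constantCoeff.comp (algebraMap R R⟦X⟧) = RingHom.id R :=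
    RingHom.ext constantCoeff_C
  rw [Polynomial.aeval_def, Polynomial.hom_eval₂, hcomp]
  rfl

theorem eq_C_constantCoeff_of_aeval_eq_zero [IsDomain R] {p : R[X]} {φ : R⟦X⟧}
    (hroot : p.aeval φ = 0) (hderiv : p.derivative.eval (constantCoeff φ) ≠ 0) :
    φ = C (constantCoeff φ) := by
  set c := constantCoeff φ
  have hc : p.IsRoot c := by
    rw [Polynomial.IsRoot, ← constantCoeff_aeval, hroot, map_zero]
  set s := p /ₘ (Polynomial.X - Polynomial.C c)
  have hs : s.aeval φ ≠ 0 := fun h ↦ hderiv <| by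
    rw [← Polynomial.eval_divByMonic_X_sub_C_of_isRoot hc, ← constantCoeff_aeval, h, map_zero]
  have hfactor : (φ - C c) * s.aeval φ = 0 := by
    rw [← hroot, ← Polynomial.mul_divByMonic_eq_iff_isRoot.2 hc, map_mul, map_sub,
      Polynomial.aeval_X, Polynomial.aeval_C]
    rfl
  exact sub_eq_zero.1 ((mul_eq_zero.1 hfactor).resolve_right hs)

end PowerSeries

theorem powerSeries_root_of_separable_is_constant_general
    {K : Type*} [Field K] (q : Polynomial K) (hq : q.Separable)
    (α : PowerSeries K) (hroot : Polynomial.aeval α q = 0) :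
    ∃ c : K, α = PowerSeries.C c := by
  have hc : q.eval (PowerSeries.constantCoeff α) = 0 := by
    rw [← PowerSeries.constantCoeff_aeval, hroot, map_zero]
  exact ⟨_, PowerSeries.eq_C_constantCoeff_of_aeval_eq_zero hroot
    (hq.eval₂_derivative_ne_zero (RingHom.id K) hc)⟩

/-- A root in `K[[t]]` of a nonzero separable polynomial over `K` is a constant
power series. -/
theorem powerSeries_root_of_separable_is_constant
    {K : Type*} [Field K] (q : Polynomial K) (hq0 : q ≠ 0) (hq : q.Separable)
    (α : PowerSeries K) (hroot : Polynomial.aeval α q = 0) :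
    ∃ c : K, α = PowerSeries.C c :=
  powerSeries_root_of_separable_is_constant_general q hq α hroot
end

section
/- Let k be a field of characteristic p > 0 and let a ∈ k be an element which is not a p-th power in k. Then the polynomial f = x^p + y·z^p − a is irreducible in the polynomial ring k[x, y, z]. -/
/-!
Viewed as a polynomial in `y`, `f = z^p * y + (x^p - a)` has degree one over `k[x, z]`. Its two
coefficients are relatively prime, since the prime `z` does not divide `x^p - a` (set `z = 0`),
and a linear polynomial with relatively prime coefficients over a domain is irreducible.
-/

namespace MvPolynomial

theorem optionEquivLeft_rename_some {R σ : Type*} [CommSemiring R] (q : MvPolynomial σ R) :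
    optionEquivLeft R σ (rename some q) = Polynomial.C q := by
  induction q using MvPolynomial.induction_on with
  | C r => simp [optionEquivLeft_C]
  | add f g hf hg => simp [hf, hg]
  | mul_X f i hf => simp [hf, optionEquivLeft_X_some]

theorem irreducible_X_none_mul_rename_some_add {R σ : Type*} [CommRing R] [IsDomain R]
    {A B : MvPolynomial σ R} (hA : A ≠ 0) (hAB : IsRelPrime A B) :
    Irreducible (X none * rename some A + rename some B : MvPolynomial (Option σ) R) := by
  rw [← MulEquiv.irreducible_iff (optionEquivLeft R σ), map_add, map_mul, optionEquivLeft_X_none,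
    optionEquivLeft_rename_some, optionEquivLeft_rename_some, mul_comm]
  exact Polynomial.irreducible_C_mul_X_add_C hA hAB

theorem not_X_dvd_X_pow_sub_C {R σ : Type*} [CommRing R] [Nontrivial R] {p : ℕ} (hp : 0 < p)
    (a : R) {i j : σ} (hij : i ≠ j) : ¬ (X j : MvPolynomial σ R) ∣ X i ^ p - C a := by
  classical
  rintro ⟨t, ht⟩
  have hsubst := congrArg (aeval fun l => if l = i then (Polynomial.X : Polynomial R) else 0) ht
  simp only [map_sub, map_pow, map_mul, aeval_X, aeval_C, if_neg hij.symm,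
    zero_mul] at hsubst
  exact Polynomial.X_pow_sub_C_ne_zero hp a hsubst

end MvPolynomial

open MvPolynomial in
theorem xp_add_yzp_sub_a_irreducible_general
    {k : Type*} [Field k] (p : ℕ) (hp : 0 < p)
    (a : k) :
    Irreducible ((X 0 : MvPolynomial (Fin 3) k) ^ p + X 1 * X 2 ^ p - MvPolynomial.C a) := by
  have hrelPrime : IsRelPrime ((X 1 : MvPolynomial (Fin 2) k) ^ p) (X 0 ^ p - C a) :=
    (X_prime.irreducible.isRelPrime_iff_not_dvd.mpr
      (not_X_dvd_X_pow_sub_C hp a (by decide))).pow_left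
  rw [← MulEquiv.irreducible_iff (renameEquiv k (finSuccEquiv' (1 : Fin 3)))]
  convert irreducible_X_none_mul_rename_some_add (pow_ne_zero p (X_ne_zero 1)) hrelPrime using 1
  have h0 : finSuccEquiv' (1 : Fin 3) 0 = some 0 := rfl
  have h2 : finSuccEquiv' (1 : Fin 3) 2 = some 1 := rfl
  simp only [renameEquiv_apply, map_sub, map_add, map_mul, map_pow, rename_X, rename_C,
    finSuccEquiv'_at, h0, h2]
  ring

open MvPolynomial in
/-- Over a field `k` of characteristic `p > 0`, if `a ∈ k` is not a `p`-th power, then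
`x^p + y·z^p − a` is irreducible in `k[x, y, z]`. -/
theorem xp_add_yzp_sub_a_irreducible
    {k : Type*} [Field k] (p : ℕ) (hp : 0 < p) [CharP k p]
    (a : k) (ha : ∀ c : k, c ^ p ≠ a) :
    Irreducible ((X 0 : MvPolynomial (Fin 3) k) ^ p + X 1 * X 2 ^ p - MvPolynomial.C a) :=
  xp_add_yzp_sub_a_irreducible_general p hp a
end
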